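/- Fix θ > 0 and an integer n ≥ 2. Let M_2, ..., M_n be independent random variables on a probability space, where M_k takes values in ℕ₀ with P(M_k = j) = ((k-1)/(θ+k-1)) · (θ/(θ+k-1))^j for all j ∈ ℕ₀, and set S(n) = ∑_{k=2}^{n} M_k. Then for every i ≥ 1, the i-th cumulant of S(n) equals ∑_{k=1}^{n-1} Li_{1-i}(θ/(k+θ)) = ∑_{b=1}^{i} S(i, b) · (b-1)! · θ^b · H_{n-1}^{(b)}, where H_{n-1}^{(b)} = ∑_{k=1}^{n-1} 1/k^b and S(i, b) is the Stirling number of the second kind. -/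

import Mathlib

/-!
The cumulant generating function of `S(n)` is the sum of those of the independent `M_k`. For the
geometric law `P(j) = (1 - q) q ^ j` it is `log (1 - q) - log (1 - q e^s)
= log (1 - q) + ∑_{l ≥ 1} (q e^s) ^ l / l`, and differentiating termwise `i` times at `s = 0` gives
`Li_{1-i}(q) = ∑_{l ≥ 1} l ^ (i - 1) q ^ l`. Grouping the maps `Fin i → Fin m` by the partition
into their fibres gives `m ^ i = ∑_b S(i, b) m (m - 1) ⋯ (m - b + 1)`. Taking `m = l` and
dividing by `l` expands `l ^ (i - 1)` in falling factorials of `l - 1`, which turns `Li_{1-i}(q)`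
into `∑_b S(i, b) (b - 1)! (q / (1 - q)) ^ b`; finally `q / (1 - q) = θ / k` for `q = θ / (k + θ)`.
-/

open MeasureTheory ProbabilityTheory

/-- The `j`-th cumulant of a real random variable `X`: the `j`-th derivative at `0`
of the cumulant generating function `s ↦ log E[e^{sX}]`. -/
noncomputable def cumulant {Ω : Type*} [MeasurableSpace Ω]
    (j : ℕ) (X : Ω → ℝ) (μ : Measure Ω) : ℝ :=
  iteratedDeriv j (fun s => cgf X μ s) 0

/-- The Stirling number of the second kind: the number of partitions of an
`i`-element set into `b` nonempty blocks. -/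
noncomputable def stirling2 (i b : ℕ) : ℕ :=
  Nat.card {P : Finset (Finset (Fin i)) //
    P.card = b ∧ ∅ ∉ P ∧ ∀ x : Fin i, ∃! A, A ∈ P ∧ x ∈ A}

open Finset Real
open scoped Nat

section FinsetPartition

variable {α β : Type*}

def IsFinsetPartition (P : Finset (Finset α)) : Prop :=
  ∅ ∉ P ∧ ∀ x : α, ∃! A, A ∈ P ∧ x ∈ A

instance [Fintype α] [DecidableEq α] (P : Finset (Finset α)) :
    Decidable (IsFinsetPartition P) := by
  unfold IsFinsetPartition ExistsUnique
  infer_instance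

namespace IsFinsetPartition

variable {P : Finset (Finset α)}

lemma nonempty_of_mem (hP : IsFinsetPartition P) {A : Finset α} (hA : A ∈ P) : A.Nonempty :=
  nonempty_iff_ne_empty.2 fun h => hP.1 (h ▸ hA)

variable [DecidableEq α]

def block (hP : IsFinsetPartition P) (x : α) : Finset α :=
  P.choose (x ∈ ·) (hP.2 x)

lemma block_mem (hP : IsFinsetPartition P) (x : α) : hP.block x ∈ P :=
  P.choose_mem _ (hP.2 x)

lemma mem_block (hP : IsFinsetPartition P) (x : α) : x ∈ hP.block x :=
  P.choose_property _ (hP.2 x)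

lemma eq_block (hP : IsFinsetPartition P) {A : Finset α} {x : α} (hA : A ∈ P) (hx : x ∈ A) :
    A = hP.block x :=
  (hP.2 x).unique ⟨hA, hx⟩ ⟨hP.block_mem x, hP.mem_block x⟩

lemma mem_block_iff (hP : IsFinsetPartition P) {x z : α} :
    z ∈ hP.block x ↔ hP.block z = hP.block x :=
  ⟨fun h => (hP.eq_block (hP.block_mem x) h).symm, fun h => h ▸ hP.mem_block z⟩

lemma card_le [Fintype α] (hP : IsFinsetPartition P) : #P ≤ Fintype.card α :=
  card_le_card_of_surjOn hP.block fun _ hA =>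
    let ⟨x, hx⟩ := hP.nonempty_of_mem hA
    ⟨x, mem_coe.2 (mem_univ x), (hP.eq_block hA hx).symm⟩

end IsFinsetPartition

variable [Fintype α] [DecidableEq α] [DecidableEq β]

def kerPartition (f : α → β) : Finset (Finset α) :=
  univ.image fun x => univ.filter fun z => f z = f x

lemma mem_kerPartition {f : α → β} {A : Finset α} :
    A ∈ kerPartition f ↔ ∃ x, univ.filter (fun z => f z = f x) = A := by
  simp [kerPartition]

lemma isFinsetPartition_kerPartition (f : α → β) : IsFinsetPartition (kerPartition f) := by
  refine ⟨fun h => ?_, fun x => ⟨_, ⟨mem_kerPartition.2 ⟨x, rfl⟩, by simp⟩, ?_⟩⟩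
  · obtain ⟨x, hx⟩ := mem_kerPartition.1 h
    exact ne_empty_of_mem (a := x) (s := univ.filter fun z => f z = f x) (by simp) hx
  · rintro A ⟨hA, hxA⟩
    obtain ⟨y, rfl⟩ := mem_kerPartition.1 hA
    simp only [mem_filter, mem_univ, true_and] at hxA
    simp [hxA]

namespace IsFinsetPartition

variable {P : Finset (Finset α)}

lemma block_eq_fiber (hP : IsFinsetPartition P) {f : α → β} (hf : kerPartition f = P) (x : α) :
    hP.block x = univ.filter fun z => f z = f x :=
  (hP.eq_block (hf ▸ mem_kerPartition.2 ⟨x, rfl⟩) (by simp)).symm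

noncomputable def kerEquiv (hP : IsFinsetPartition P) :
    {f : α → β // kerPartition f = P} ≃ (P ↪ β) where
  toFun f := ⟨fun A => f.1 (hP.nonempty_of_mem A.2).choose, fun A B hAB => by
    have hA := hP.eq_block A.2 (hP.nonempty_of_mem A.2).choose_spec
    have hB := hP.eq_block B.2 (hP.nonempty_of_mem B.2).choose_spec
    rw [hP.block_eq_fiber f.2] at hA hB
    simp only at hAB
    rw [hAB] at hA
    exact Subtype.ext (hA.trans hB.symm)⟩
  invFun g := ⟨fun x => g ⟨hP.block x, hP.block_mem x⟩, by
    have hfiber (x : α) : univ.filter (fun z => g ⟨hP.block z, hP.block_mem z⟩ =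
        g ⟨hP.block x, hP.block_mem x⟩) = hP.block x := by
      ext z
      simp [hP.mem_block_iff]
    ext A
    simp only [mem_kerPartition, hfiber]
    exact ⟨fun ⟨x, hx⟩ => hx ▸ hP.block_mem x, fun hA =>
      let ⟨x, hx⟩ := hP.nonempty_of_mem hA
      ⟨x, (hP.eq_block hA hx).symm⟩⟩⟩
  left_inv f := by
    ext x
    have := (hP.nonempty_of_mem (hP.block_mem x)).choose_spec
    exact (mem_filter.1 ((Finset.ext_iff.1 (hP.block_eq_fiber f.2 x) _).1 this)).2
  right_inv g := by
    ext A
    exact congrArg g (Subtype.ext (hP.eq_block A.2 (hP.nonempty_of_mem A.2).choose_spec).symm)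

lemma card_kerPartition_eq [Fintype β] (hP : IsFinsetPartition P) :
    Fintype.card {f : α → β // kerPartition f = P} = (Fintype.card β).descFactorial #P := by
  rw [Fintype.card_congr hP.kerEquiv, Fintype.card_embedding_eq, Fintype.card_coe]

end IsFinsetPartition

theorem card_pow_card_eq_sum_descFactorial [Fintype β] :
    Fintype.card β ^ Fintype.card α =
      ∑ P ∈ univ.filter (IsFinsetPartition (α := α)), (Fintype.card β).descFactorial #P := by
  rw [← Fintype.card_fun, ← card_univ,
    card_eq_sum_card_fiberwise (f := kerPartition) fun f _ => mem_filter.2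
      ⟨mem_univ _, isFinsetPartition_kerPartition f⟩]
  refine sum_congr rfl fun P hP => ?_
  rw [← (mem_filter.1 hP).2.card_kerPartition_eq (β := β), Fintype.card_subtype]

end FinsetPartition

lemma stirling2_eq_card (i b : ℕ) :
    stirling2 i b = #(univ.filter fun P : Finset (Finset (Fin i)) =>
      IsFinsetPartition P ∧ #P = b) := by
  rw [stirling2, ← Fintype.card_subtype, ← Nat.card_eq_fintype_card]
  exact Nat.card_congr (Equiv.subtypeEquivRight fun P => by unfold IsFinsetPartition; tauto)

theorem pow_eq_sum_stirling2_mul_descFactorial (m i : ℕ) :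
    m ^ i = ∑ b ∈ range (i + 1), stirling2 i b * m.descFactorial b := by
  have h := card_pow_card_eq_sum_descFactorial (α := Fin i) (β := Fin m)
  simp only [Fintype.card_fin] at h
  rw [h, ← sum_fiberwise_of_maps_to (g := card) (t := range (i + 1)) fun P hP =>
    mem_range.2 (Nat.lt_succ_of_le (by simpa using (mem_filter.1 hP).2.card_le))]
  refine sum_congr rfl fun b _ => ?_
  rw [sum_congr rfl fun P hP => by rw [(mem_filter.1 hP).2], sum_const, smul_eq_mul,
    stirling2_eq_card, filter_filter]

lemma stirling2_zero_right {i : ℕ} (hi : i ≠ 0) : stirling2 i 0 = 0 := by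
  rw [stirling2_eq_card, card_eq_zero, filter_eq_empty_iff]
  rintro P - ⟨hP, hcard⟩
  obtain ⟨A, ⟨hA, -⟩, -⟩ := hP.2 ⟨0, Nat.pos_of_ne_zero hi⟩
  simp [card_eq_zero.1 hcard] at hA

theorem succ_pow_eq_sum_stirling2_mul_descFactorial {i : ℕ} (hi : 1 ≤ i) (l : ℕ) :
    (l + 1) ^ (i - 1) = ∑ b ∈ Icc 1 i, stirling2 i b * l.descFactorial (b - 1) := by
  have h := pow_eq_sum_stirling2_mul_descFactorial (l + 1) i
  rw [range_eq_Ico, sum_eq_sum_Ico_succ_bot (Nat.succ_pos i), stirling2_zero_right (by omega),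
    zero_mul, zero_add, zero_add, Nat.succ_eq_add_one, Ico_add_one_right_eq_Icc] at h
  apply Nat.eq_of_mul_eq_mul_left l.add_one_pos
  rw [← pow_succ', Nat.sub_add_cancel hi, h, mul_sum]
  refine sum_congr rfl fun b hb => ?_
  obtain ⟨c, rfl⟩ := Nat.exists_eq_add_of_le' (mem_Icc.1 hb).1
  rw [Nat.succ_descFactorial_succ, Nat.add_sub_cancel]
  ring

lemma hasSum_pow_succ_mul_descFactorial {q : ℝ} (hq : ‖q‖ < 1) (r : ℕ) :
    HasSum (fun l : ℕ => q ^ (l + 1) * l.descFactorial r) (r ! * (q / (1 - q)) ^ (r + 1)) := by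
  rw [← hasSum_nat_add_iff' r, sum_eq_zero fun l hl => by
    simp [Nat.descFactorial_eq_zero_iff_lt.2 (mem_range.1 hl)], sub_zero]
  have hterm (n : ℕ) : q ^ (n + r + 1) * ((n + r).descFactorial r : ℝ) =
      r ! * q ^ (r + 1) * (((n + r).choose r : ℕ) * q ^ n) := by
    rw [Nat.descFactorial_eq_factorial_mul_choose]
    push_cast
    ring
  have hvalue : (r ! * (q / (1 - q)) ^ (r + 1) : ℝ) =
      r ! * q ^ (r + 1) * (1 / (1 - q) ^ (r + 1)) := by
    rw [div_pow]
    ring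
  simp only [hterm, hvalue]
  exact (hasSum_choose_mul_geometric_of_norm_lt_one r hq).mul_left _

theorem tsum_pow_succ_mul_succ_pow_eq_sum_stirling2 {q : ℝ} (hq : ‖q‖ < 1) {i : ℕ} (hi : 1 ≤ i) :
    ∑' l : ℕ, q ^ (l + 1) * ((l + 1 : ℕ) : ℝ) ^ (i - 1) =
      ∑ b ∈ Icc 1 i, (stirling2 i b : ℝ) * (b - 1)! * (q / (1 - q)) ^ b := by
  have hterm (l : ℕ) : q ^ (l + 1) * ((l + 1 : ℕ) : ℝ) ^ (i - 1) =
      ∑ b ∈ Icc 1 i, (stirling2 i b : ℝ) * (q ^ (l + 1) * l.descFactorial (b - 1)) := by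
    rw [← Nat.cast_pow, succ_pow_eq_sum_stirling2_mul_descFactorial hi l]
    push_cast
    rw [mul_sum]
    exact sum_congr rfl fun b _ => by ring
  rw [tsum_congr hterm, (hasSum_sum fun b (_ : b ∈ Icc 1 i) =>
    (hasSum_pow_succ_mul_descFactorial hq (b - 1)).mul_left (stirling2 i b : ℝ)).tsum_eq]
  refine sum_congr rfl fun b hb => ?_
  rw [Nat.sub_add_cancel (mem_Icc.1 hb).1, mul_assoc]

lemma iteratedDeriv_eq_of_hasDerivAt_succ {𝕜 E : Type*} [NontriviallyNormedField 𝕜]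
    [NormedAddCommGroup E] [NormedSpace 𝕜 E] {F : ℕ → 𝕜 → E} {U : Set 𝕜} (hU : IsOpen U)
    (hF : ∀ m, ∀ x ∈ U, HasDerivAt (F m) (F (m + 1) x) x) (j : ℕ) {x : 𝕜} (hx : x ∈ U) :
    iteratedDeriv j (F 0) x = F j x := by
  induction j generalizing F with
  | zero => simp
  | succ j ih =>
    have hderiv : deriv (F 0) =ᶠ[nhds x] F 1 :=
      Filter.eventually_of_mem (hU.mem_nhds hx) fun y hy => (hF 0 y hy).deriv
    rw [iteratedDeriv_succ', hderiv.iteratedDeriv_eq j]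
    exact ih fun m => hF (m + 1)

lemma summable_pow_succ_mul_natCast_pow {r : ℝ} (hr : ‖r‖ < 1) (m : ℕ) :
    Summable fun l : ℕ => r ^ (l + 1) * ((l + 1 : ℕ) : ℝ) ^ m :=
  ((summable_nat_add_iff (f := fun n : ℕ => (n : ℝ) ^ m * r ^ n) 1).2
    (summable_pow_mul_geometric_of_norm_lt_one m hr)).congr
    fun _ => mul_comm _ _

lemma hasDerivAt_tsum_mul_exp_pow {q : ℝ} (hq : 0 ≤ q) (m : ℕ) {s : ℝ} (hs : q * exp s < 1) :
    HasDerivAt (fun t => ∑' l : ℕ, (q * exp t) ^ (l + 1) * ((l + 1 : ℕ) : ℝ) ^ m)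
      (∑' l : ℕ, (q * exp s) ^ (l + 1) * ((l + 1 : ℕ) : ℝ) ^ (m + 1)) s := by
  obtain ⟨c, hsc, hc⟩ : ∃ c, s < c ∧ q * exp c < 1 :=
    (ContinuousAt.eventually_lt (f := fun t => q * exp t) (by fun_prop) continuousAt_const
      hs).exists_gt
  have hnorm {t : ℝ} (ht : q * exp t < 1) : ‖q * exp t‖ < 1 := by
    rwa [Real.norm_of_nonneg (by positivity)]
  refine hasDerivAt_tsum_of_isPreconnected
    (g := fun l t => (q * exp t) ^ (l + 1) * ((l + 1 : ℕ) : ℝ) ^ m)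
    (g' := fun l t => (q * exp t) ^ (l + 1) * ((l + 1 : ℕ) : ℝ) ^ (m + 1))
    (summable_pow_succ_mul_natCast_pow (hnorm hc) (m + 1))
    isOpen_Iio (convex_Iio c).isPreconnected (fun l t _ => ?_) (fun l t ht => ?_) hsc
    (summable_pow_succ_mul_natCast_pow (hnorm hs) m) hsc
  · refine ((((hasDerivAt_exp t).const_mul q).fun_pow (l + 1)).mul_const
      (((l + 1 : ℕ) : ℝ) ^ m)).congr_deriv ?_
    rw [Nat.add_sub_cancel]
    push_cast
    ring
  · rw [Real.norm_of_nonneg (by positivity)]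
    gcongr
    exact le_of_lt ht

/-- The `m`-th derivative of the cumulant generating function of the geometric law
`P(j) = (1 - q) q ^ j`; at `s = 0` the entry `m + 1` is the polylogarithm `Li_{-m}(q)`. -/
noncomputable def geometricCgfDeriv (q : ℝ) : ℕ → ℝ → ℝ
  | 0 => fun s => log (1 - q) - log (1 - q * exp s)
  | m + 1 => fun s => ∑' l : ℕ, (q * exp s) ^ (l + 1) * ((l + 1 : ℕ) : ℝ) ^ m

lemma hasDerivAt_geometricCgfDeriv {q : ℝ} (hq : 0 ≤ q) (m : ℕ) {s : ℝ} (hs : q * exp s < 1) :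
    HasDerivAt (geometricCgfDeriv q m) (geometricCgfDeriv q (m + 1) s) s := by
  cases m with
  | zero =>
    have htsum : ∑' l : ℕ, (q * exp s) ^ (l + 1) = q * exp s / (1 - q * exp s) := by
      simp only [pow_succ', tsum_mul_left, tsum_geometric_of_lt_one (by positivity) hs,
        div_eq_mul_inv]
    have hpos : 0 < 1 - q * exp s := by linarith
    refine (((((hasDerivAt_exp s).const_mul q).const_sub 1).log hpos.ne').const_sub
      (log (1 - q))).congr_deriv ?_
    simp only [geometricCgfDeriv, pow_zero, mul_one, htsum]
    ring
  | succ m => exact hasDerivAt_tsum_mul_exp_pow hq m hs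

section Geometric

variable {p : unitInterval}

lemma integrable_exp_mul_geometricMeasure (hp : p ≠ 0) {s : ℝ} (hs : (1 - p) * exp s < 1) :
    Integrable (fun n : ℕ => exp (s * n)) (geometricMeasure p) := by
  have h0 : 0 ≤ (1 - p : ℝ) * exp s := mul_nonneg (unitInterval.one_minus_nonneg p) (exp_pos s).le
  rw [integrable_geometricMeasure_iff hp]
  refine ((summable_geometric_of_lt_one h0 hs).mul_left (p : ℝ)).congr fun n => ?_
  rw [Real.norm_of_nonneg (exp_pos _).le, mul_pow, ← exp_nat_mul]
  ring_nf

lemma mgf_geometricMeasure (hp : p ≠ 0) {s : ℝ} (hs : (1 - p) * exp s < 1) :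
    mgf (fun n : ℕ => (n : ℝ)) (geometricMeasure p) s = p / (1 - (1 - p) * exp s) := by
  have h0 : 0 ≤ (1 - p : ℝ) * exp s := mul_nonneg (unitInterval.one_minus_nonneg p) (exp_pos s).le
  have hterm (n : ℕ) : ((1 - p : ℝ) ^ n * p) • exp (s * n) = p * ((1 - p) * exp s) ^ n := by
    rw [smul_eq_mul, mul_pow, ← exp_nat_mul]
    ring_nf
  rw [mgf, integral_geometricMeasure hp, tsum_congr hterm, tsum_mul_left,
    tsum_geometric_of_lt_one h0 hs, div_eq_mul_inv]

end Geometric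

section GeometricRandomVariable

variable {Ω : Type*} [MeasurableSpace Ω] {μ : Measure Ω} {X : Ω → ℕ} {q : ℝ}

lemma exists_map_eq_geometricMeasure (hX : Measurable X) (hq0 : 0 ≤ q) (hq1 : q < 1)
    (hlaw : ∀ j : ℕ, μ {ω | X ω = j} = ENNReal.ofReal ((1 - q) * q ^ j)) :
    ∃ p : unitInterval, p ≠ 0 ∧ 1 - (p : ℝ) = q ∧ μ.map X = geometricMeasure p := by
  have hp : (⟨1 - q, sub_nonneg.2 hq1.le, sub_le_self 1 hq0⟩ : unitInterval) ≠ 0 :=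
    fun h => by
      have := congrArg Subtype.val h
      norm_num at this
      linarith
  refine ⟨_, hp, sub_sub_cancel 1 q, Measure.ext_of_singleton fun j => ?_⟩
  rw [Measure.map_apply hX (measurableSet_singleton j), geometricMeasure_singleton hp,
    sub_sub_cancel, mul_comm]
  exact hlaw j

lemma integrable_exp_mul_of_geometric (hX : Measurable X) (hq0 : 0 ≤ q) (hq1 : q < 1)
    (hlaw : ∀ j : ℕ, μ {ω | X ω = j} = ENNReal.ofReal ((1 - q) * q ^ j))
    {s : ℝ} (hs : q * exp s < 1) :
    Integrable (fun ω => exp (s * X ω)) μ := by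
  obtain ⟨p, hp, rfl, hmap⟩ := exists_map_eq_geometricMeasure hX hq0 hq1 hlaw
  refine (integrable_map_measure (g := fun n : ℕ => exp (s * n))
    (measurable_of_countable _).aestronglyMeasurable hX.aemeasurable).1 ?_
  rw [hmap]
  exact integrable_exp_mul_geometricMeasure hp hs

lemma cgf_natCast_of_geometric (hX : Measurable X) (hq0 : 0 ≤ q) (hq1 : q < 1)
    (hlaw : ∀ j : ℕ, μ {ω | X ω = j} = ENNReal.ofReal ((1 - q) * q ^ j))
    {s : ℝ} (hs : q * exp s < 1) :
    cgf (fun ω => (X ω : ℝ)) μ s = log (1 - q) - log (1 - q * exp s) := by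
  obtain ⟨p, hp, rfl, hmap⟩ := exists_map_eq_geometricMeasure hX hq0 hq1 hlaw
  have hpos : 0 < 1 - (1 - p : ℝ) * exp s := sub_pos.2 hs
  rw [cgf, ← Function.comp_def, ← mgf_map hX.aemeasurable (by fun_prop), hmap,
    mgf_geometricMeasure hp hs, sub_sub_cancel, log_div (by simpa using hp) hpos.ne']

end GeometricRandomVariable

section IndependentSum

variable {Ω ι : Type*} [MeasurableSpace Ω] {μ : Measure Ω} {s : Finset ι} {M : ι → Ω → ℕ}
  {q : ι → ℝ}

theorem cgf_natCast_sum_of_geometric (hmeas : ∀ k ∈ s, Measurable (M k))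
    (hindep : iIndepFun (fun k : s => M k) μ) (hq0 : ∀ k ∈ s, 0 ≤ q k) (hq1 : ∀ k ∈ s, q k < 1)
    (hlaw : ∀ k ∈ s, ∀ j : ℕ, μ {ω | M k ω = j} = ENNReal.ofReal ((1 - q k) * q k ^ j))
    {t : ℝ} (ht : ∀ k ∈ s, q k * exp t < 1) :
    cgf (fun ω => ((∑ k ∈ s, M k ω : ℕ) : ℝ)) μ t = ∑ k ∈ s, geometricCgfDeriv (q k) 0 t := by
  have hsum : (fun ω => ((∑ k ∈ s, M k ω : ℕ) : ℝ)) =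
      ∑ k : s, (fun m : ℕ => (m : ℝ)) ∘ M k := by
    ext ω
    rw [Finset.sum_apply]
    push_cast
    exact (sum_coe_sort s fun k => (M k ω : ℝ)).symm
  rw [hsum, (hindep.comp _ fun _ => measurable_from_nat).cgf_sum
    (fun k => measurable_from_nat.comp (hmeas k k.2))
    fun k _ => integrable_exp_mul_of_geometric (hmeas k k.2) (hq0 k k.2) (hq1 k k.2)
      (hlaw k k.2) (ht k k.2)]
  rw [← sum_coe_sort s fun k => geometricCgfDeriv (q k) 0 t]
  exact sum_congr rfl fun k _ => cgf_natCast_of_geometric (hmeas k k.2) (hq0 k k.2) (hq1 k k.2)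
    (hlaw k k.2) (ht k k.2)

theorem cumulant_natCast_sum_of_geometric (hmeas : ∀ k ∈ s, Measurable (M k))
    (hindep : iIndepFun (fun k : s => M k) μ) (hq0 : ∀ k ∈ s, 0 ≤ q k) (hq1 : ∀ k ∈ s, q k < 1)
    (hlaw : ∀ k ∈ s, ∀ j : ℕ, μ {ω | M k ω = j} = ENNReal.ofReal ((1 - q k) * q k ^ j))
    (i : ℕ) :
    cumulant (i + 1) (fun ω => ((∑ k ∈ s, M k ω : ℕ) : ℝ)) μ =
      ∑ k ∈ s, ∑' l : ℕ, q k ^ (l + 1) * ((l + 1 : ℕ) : ℝ) ^ i := by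
  set U := ⋂ k ∈ s, {t : ℝ | q k * exp t < 1}
  have hU : IsOpen U := isOpen_biInter_finset fun k _ => isOpen_lt (by fun_prop) continuous_const
  have hmemU {t : ℝ} : t ∈ U ↔ ∀ k ∈ s, q k * exp t < 1 := by simp [U]
  have hcgf : (fun t => cgf (fun ω => ((∑ k ∈ s, M k ω : ℕ) : ℝ)) μ t) =ᶠ[nhds 0]
      fun t => ∑ k ∈ s, geometricCgfDeriv (q k) 0 t :=
    Filter.eventually_of_mem (hU.mem_nhds (hmemU.2 (by simpa using hq1))) fun t ht =>
      cgf_natCast_sum_of_geometric hmeas hindep hq0 hq1 hlaw (hmemU.1 ht)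
  rw [cumulant, hcgf.iteratedDeriv_eq,
    iteratedDeriv_eq_of_hasDerivAt_succ (F := fun m t => ∑ k ∈ s, geometricCgfDeriv (q k) m t) hU
      (fun m t ht => HasDerivAt.fun_sum fun k hk =>
        hasDerivAt_geometricCgfDeriv (hq0 k hk) m (hmemU.1 ht k hk))
      (i + 1) (hmemU.2 (by simpa using hq1))]
  simp [geometricCgfDeriv]

end IndependentSum

lemma sum_Icc_two_eq_sum_Icc_one_add_one {R : Type*} [AddCommMonoid R] (f : ℕ → R) (n : ℕ) :
    ∑ k ∈ Icc 2 n, f k = ∑ k ∈ Icc 1 (n - 1), f (k + 1) :=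
  sum_nbij' (· - 1) (· + 1)
    (fun k hk => by simp only [mem_Icc] at hk ⊢; omega)
    (fun k hk => by simp only [mem_Icc] at hk ⊢; omega)
    (fun k hk => by simp only [mem_Icc] at hk; omega) (fun _ _ => rfl)
    (fun k hk => by simp only [mem_Icc] at hk; congr 1; omega)

theorem sum_tsum_pow_succ_mul_succ_pow_eq_sum_stirling2_mul_harmonic {θ : ℝ} (hθ : 0 < θ)
    (N : ℕ) {i : ℕ} (hi : 1 ≤ i) :
    ∑ k ∈ Icc 1 N, ∑' l : ℕ, (θ / (k + θ)) ^ (l + 1) * ((l + 1 : ℕ) : ℝ) ^ (i - 1) =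
      ∑ b ∈ Icc 1 i, (stirling2 i b : ℝ) * (b - 1)! * θ ^ b * ∑ k ∈ Icc 1 N, 1 / (k : ℝ) ^ b := by
  have hpolylog (k : ℕ) (hk : 1 ≤ k) :
      ∑' l : ℕ, (θ / (k + θ)) ^ (l + 1) * ((l + 1 : ℕ) : ℝ) ^ (i - 1) =
        ∑ b ∈ Icc 1 i, (stirling2 i b : ℝ) * (b - 1)! * (θ / k) ^ b := by
    have hk' : (1 : ℝ) ≤ k := by exact_mod_cast hk
    have hnorm : ‖θ / (k + θ)‖ < 1 := by
      rw [Real.norm_of_nonneg (by positivity), div_lt_one (by positivity)]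
      linarith
    have hratio : θ / (k + θ) / (1 - θ / (k + θ)) = θ / k := by
      have hkθ : (k : ℝ) + θ ≠ 0 := by positivity
      rw [one_sub_div hkθ, div_div_div_cancel_right₀ hkθ, add_sub_cancel_right]
    rw [tsum_pow_succ_mul_succ_pow_eq_sum_stirling2 hnorm hi, hratio]
  rw [sum_congr rfl fun k hk => hpolylog k (mem_Icc.1 hk).1, sum_comm]
  refine sum_congr rfl fun b _ => ?_
  rw [mul_sum]
  exact sum_congr rfl fun k _ => by ring

theorem segregatingSites_cumulants_general {Ω : Type*} [MeasurableSpace Ω]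
    (μ : Measure Ω)
    (θ : ℝ) (hθ : 0 < θ) (n : ℕ)
    (M : ℕ → Ω → ℕ) (hmeas : ∀ k, Measurable (M k))
    (hindep : iIndepFun
      (fun k : (Finset.Icc 2 n : Finset ℕ) => M k.val) μ)
    (hlaw : ∀ k, 2 ≤ k → k ≤ n → ∀ j : ℕ, μ {ω | M k ω = j} =
      ENNReal.ofReal
        (((k : ℝ) - 1) / (θ + k - 1) * (θ / (θ + k - 1)) ^ j)) :
    ∀ i : ℕ, 1 ≤ i →
      cumulant i (fun ω => (∑ k ∈ Finset.Icc 2 n, M k ω : ℕ)) μ =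
          ∑ k ∈ Finset.Icc 1 (n - 1),
            ∑' l : ℕ, (θ / (k + θ)) ^ (l + 1) * ((l + 1 : ℕ) : ℝ) ^ (i - 1) ∧
      cumulant i (fun ω => (∑ k ∈ Finset.Icc 2 n, M k ω : ℕ)) μ =
          ∑ b ∈ Finset.Icc 1 i,
            (stirling2 i b : ℝ) * Nat.factorial (b - 1) * θ ^ b *
              ∑ k ∈ Finset.Icc 1 (n - 1), 1 / (k : ℝ) ^ b := by
  intro i hi
  have hk2 {k : ℕ} (hk : k ∈ Icc 2 n) : (2 : ℝ) ≤ k := by exact_mod_cast (mem_Icc.1 hk).1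
  have hden {k : ℕ} (hk : k ∈ Icc 2 n) : 0 < θ + k - 1 := by linarith [hk2 hk]
  have hcum := cumulant_natCast_sum_of_geometric (q := fun k : ℕ => θ / (θ + k - 1))
    (fun k _ => hmeas k) hindep (fun k hk => (div_pos hθ (hden hk)).le)
    (fun k hk => (div_lt_one (hden hk)).2 (by linarith [hk2 hk]))
    (fun k hk j => by
      rw [hlaw k (mem_Icc.1 hk).1 (mem_Icc.1 hk).2, one_sub_div (hden hk).ne']
      ring_nf)
    (i - 1)
  have hshift (k : ℕ) : θ + ((k + 1 : ℕ) : ℝ) - 1 = k + θ := by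
    push_cast
    ring
  rw [Nat.sub_add_cancel hi, sum_Icc_two_eq_sum_Icc_one_add_one] at hcum
  simp only [hshift] at hcum
  exact ⟨hcum,
    hcum.trans (sum_tsum_pow_succ_mul_succ_pow_eq_sum_stirling2_mul_harmonic hθ (n - 1) hi)⟩

/-- Cumulants of the number of segregating sites `S(n) = ∑_{k=2}^n M_k`, where the `M_k`
are independent geometric random variables with success parameter `(k-1)/(θ+k-1)`:
`κ_i(S(n)) = ∑_{k=1}^{n-1} Li_{1-i}(θ/(k+θ)) = ∑_{b=1}^i S(i,b)(b-1)! θ^b H_{n-1}^{(b)}`. -/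
theorem segregatingSites_cumulants {Ω : Type*} [MeasurableSpace Ω]
    (μ : Measure Ω) [IsProbabilityMeasure μ]
    (θ : ℝ) (hθ : 0 < θ) (n : ℕ) (hn : 2 ≤ n)
    (M : ℕ → Ω → ℕ) (hmeas : ∀ k, Measurable (M k))
    (hindep : iIndepFun
      (fun k : (Finset.Icc 2 n : Finset ℕ) => M k.val) μ)
    (hlaw : ∀ k, 2 ≤ k → k ≤ n → ∀ j : ℕ, μ {ω | M k ω = j} =
      ENNReal.ofReal
        (((k : ℝ) - 1) / (θ + k - 1) * (θ / (θ + k - 1)) ^ j)) :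
    ∀ i : ℕ, 1 ≤ i →
      cumulant i (fun ω => (∑ k ∈ Finset.Icc 2 n, M k ω : ℕ)) μ =
          ∑ k ∈ Finset.Icc 1 (n - 1),
            ∑' l : ℕ, (θ / (k + θ)) ^ (l + 1) * ((l + 1 : ℕ) : ℝ) ^ (i - 1) ∧
      cumulant i (fun ω => (∑ k ∈ Finset.Icc 2 n, M k ω : ℕ)) μ =
          ∑ b ∈ Finset.Icc 1 i,
            (stirling2 i b : ℝ) * Nat.factorial (b - 1) * θ ^ b *
              ∑ k ∈ Finset.Icc 1 (n - 1), 1 / (k : ℝ) ^ b :=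
  segregatingSites_cumulants_general μ θ hθ n M hmeas hindep hlaw
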